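/- Let H = ⊕_{α=1}^m H_α with orthogonal projections Π_α, let ψ = Σ_α √p_α ψ̂_α and φ = Σ_β √q_β φ̂_β be unit vectors with ψ̂_α ∈ H_α, φ̂_β ∈ H_β unit vectors, and p, q probability vectors with all entries positive. Suppose p = Σ_l λ_l S_{π_l} q for weights λ_l ≥ 0 summing to 1 and permutations π_l of {1,...,m}. Define A_l = √λ_l Σ_α √(q_{π_l(α)}/p_α) |φ̂_{π_l(α)}⟩⟨ψ̂_α|. Then A_l ψ = √λ_l φ for every l, and consequently Σ_l A_l |ψ⟩⟨ψ| A_l† = |φ⟩⟨φ|. -/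

import Mathlib

variable {H : Type*} [NormedAddCommGroup H] [InnerProductSpace ℂ H] [FiniteDimensional ℂ H]

/-- The rank-one operator `|u⟩⟨v| : x ↦ ⟨v, x⟩ u`. -/
noncomputable def outer (u v : H) : H →ₗ[ℂ] H where
  toFun x := (inner ℂ v x : ℂ) • u
  map_add' x y := by simp [inner_add_right, add_smul]
  map_smul' c x := by simp [inner_smul_right, mul_smul]

/-!
Each `A l` sends `ψ̂_α` to `√(λ_l q_{π_l α} / p_α) φ̂_{π_l α}`, so by orthonormality of the `ψ̂_α`
it sends `ψ = ∑ √p_α ψ̂_α` to `√λ_l ∑_α √q_{π_l α} φ̂_{π_l α}`, which is `√λ_l φ` after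
reindexing by the permutation `π_l`. Then `A l |ψ⟩⟨ψ| A l† = |A l ψ⟩⟨A l ψ| = λ_l |φ⟩⟨φ|`,
and the weights `λ_l` sum to one.
-/

theorem Real.sqrt_div_mul_sqrt (x : ℝ) {y : ℝ} (hy : 0 < y) : √(x / y) * √y = √x := by
  rw [Real.sqrt_div' x hy.le, div_mul_cancel₀ _ (Real.sqrt_ne_zero'.mpr hy)]

section Outer

variable {E : Type*} [NormedAddCommGroup E] [InnerProductSpace ℂ E]

@[simp]
theorem outer_apply (u v x : E) : outer u v x = inner ℂ v x • u := rfl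

theorem outer_smul_smul (a b : ℂ) (u v : E) :
    outer (a • u) (b • v) = (a * starRingEnd ℂ b) • outer u v := by
  ext x
  simp only [outer_apply, LinearMap.smul_apply, inner_smul_left, smul_smul]
  congr 1
  ring

theorem comp_outer_comp_adjoint [FiniteDimensional ℂ E] (T S : E →ₗ[ℂ] E) (u v : E) :
    T ∘ₗ outer u v ∘ₗ LinearMap.adjoint S = outer (T u) (S v) := by
  ext x
  simp [LinearMap.adjoint_inner_right]

theorem Orthonormal.sum_smul_outer_apply_sum_smul {κ : Type*} [Fintype κ] {e : κ → E}
    (he : Orthonormal ℂ e) (f : κ → E) (c d : κ → ℂ) :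
    (∑ i, c i • outer (f i) (e i)) (∑ i, d i • e i) = ∑ i, (c i * d i) • f i := by
  simp only [LinearMap.sum_apply, LinearMap.smul_apply, outer_apply, he.inner_right_fintype,
    smul_smul]

end Outer

theorem kraus_construction_achieves_transformation_general {m : ℕ} {ι : Type*} [Fintype ι]
    (ψhat φhat : Fin m → H)
    (hψon : Orthonormal ℂ ψhat)
    (p q : Fin m → ℝ)
    (hp : ∀ α, 0 < p α)
    (lam : ι → ℝ) (hlam : ∀ l, 0 ≤ lam l) (hlamsum : ∑ l, lam l = 1)
    (π : ι → Equiv.Perm (Fin m))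
    (ψ φ : H)
    (hψ : ψ = ∑ α, (Real.sqrt (p α) : ℂ) • ψhat α)
    (hφ : φ = ∑ β, (Real.sqrt (q β) : ℂ) • φhat β)
    (A : ι → (H →ₗ[ℂ] H))
    (hA : ∀ l, A l = (Real.sqrt (lam l) : ℂ) •
      ∑ α, (Real.sqrt (q (π l α) / p α) : ℂ) • outer (φhat (π l α)) (ψhat α)) :
    (∀ l, A l ψ = (Real.sqrt (lam l) : ℂ) • φ) ∧
      ∑ l, A l ∘ₗ outer ψ ψ ∘ₗ LinearMap.adjoint (A l) = outer φ φ := by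
  have hAψ : ∀ l, A l ψ = (Real.sqrt (lam l) : ℂ) • φ := by
    intro l
    rw [hA, hψ, hφ, LinearMap.smul_apply, hψon.sum_smul_outer_apply_sum_smul,
      ← Equiv.sum_comp (π l) fun β => (Real.sqrt (q β) : ℂ) • φhat β]
    simp only [← Complex.ofReal_mul, Real.sqrt_div_mul_sqrt _ (hp _)]
  refine ⟨hAψ, ?_⟩
  calc ∑ l, A l ∘ₗ outer ψ ψ ∘ₗ LinearMap.adjoint (A l)
      = ∑ l, (lam l : ℂ) • outer φ φ := by
        refine Finset.sum_congr rfl fun l _ => ?_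
        rw [comp_outer_comp_adjoint, hAψ, outer_smul_smul, Complex.conj_ofReal,
          ← Complex.ofReal_mul, Real.mul_self_sqrt (hlam l)]
    _ = outer φ φ := by
        rw [← Finset.sum_smul, ← Complex.ofReal_sum, hlamsum, Complex.ofReal_one, one_smul]

theorem kraus_construction_achieves_transformation {m : ℕ} {ι : Type*} [Fintype ι]
    (ψhat φhat : Fin m → H)
    (hψon : Orthonormal ℂ ψhat) (hφon : Orthonormal ℂ φhat)
    (p q : Fin m → ℝ)
    (hp : ∀ α, 0 < p α) (hq : ∀ β, 0 < q β)
    (hpsum : ∑ α, p α = 1) (hqsum : ∑ β, q β = 1)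
    (lam : ι → ℝ) (hlam : ∀ l, 0 ≤ lam l) (hlamsum : ∑ l, lam l = 1)
    (π : ι → Equiv.Perm (Fin m))
    (hmix : ∀ α, p α = ∑ l, lam l * q (π l α))
    (ψ φ : H)
    (hψ : ψ = ∑ α, (Real.sqrt (p α) : ℂ) • ψhat α)
    (hφ : φ = ∑ β, (Real.sqrt (q β) : ℂ) • φhat β)
    (A : ι → (H →ₗ[ℂ] H))
    (hA : ∀ l, A l = (Real.sqrt (lam l) : ℂ) •
      ∑ α, (Real.sqrt (q (π l α) / p α) : ℂ) • outer (φhat (π l α)) (ψhat α)) :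
    (∀ l, A l ψ = (Real.sqrt (lam l) : ℂ) • φ) ∧
      ∑ l, A l ∘ₗ outer ψ ψ ∘ₗ LinearMap.adjoint (A l) = outer φ φ :=
  kraus_construction_achieves_transformation_general ψhat φhat hψon p q hp lam hlam hlamsum π ψ φ hψ
    hφ A hA
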